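/- arXiv:1010.3665 — 4 statements merged into one kernel-verified Lean document; each statement's English description precedes it below -/
import Mathlib

section
/- Let n ≥ 1 and 1 ≤ q ≤ n. Let B be an n×n Hermitian complex matrix with the property that for every q-element subset S of the index set, the sum over S of the eigenvalues of B (counted with multiplicity) is nonnegative. Let u : (Fin q → Fin n) → ℂ be alternating, i.e. u(v ∘ π) = sign(π)·u(v) for every permutation π of Fin q, and u(v) = 0 whenever v is not injective. Then the quantity Σ_{K : Fin (q−1) → Fin n} Σ_{j,k ∈ Fin n} B_{j,k} · u(Fin.cons j K) · conj(u(Fin.cons k K)) is a real number and is nonnegative (its imaginary part vanishes and its real part is ≥ 0). -/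
/-
Diagonalise `B = U D Uᴴ`. The Levi form is `u ⬝ᵥ (B ⊗ 1 ⊗ ⋯ ⊗ 1) *ᵥ star u`, with
`B ⊗ 1 ⊗ ⋯ ⊗ 1 = piKron (Pi.mulSingle 0 B)`, and conjugating by the unitary `U ⊗ ⋯ ⊗ U` turns it
into `∑ₓ λ (x 0) * |ũ x|²`, where `ũ = u ᵥ* (U ⊗ ⋯ ⊗ U)` is again antisymmetric. Hence `|ũ|²` is
permutation invariant and vanishes off injective tuples, so the slot `0` may be replaced by any
slot; averaging over the `q` slots gives `q * ∑ₓ λ (x 0) * |ũ x|² = ∑ₓ (∑ᵢ λ (x i)) * |ũ x|²`,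
and for injective `x` the inner sum is a sum of `q` eigenvalues with distinct indices, hence
nonnegative.
-/

open Matrix Finset Function

open scoped ComplexConjugate ComplexOrder

namespace Matrix

variable {ι l m n R : Type*} [Fintype ι]

/-- The Kronecker product `⨂ᵢ A i`, with rows and columns indexed by tuples. -/
def piKron [CommSemiring R] (A : ι → Matrix m n R) : Matrix (ι → m) (ι → n) R :=
  of fun v w => ∏ i, A i (v i) (w i)

variable [CommSemiring R]

@[simp]
theorem piKron_apply (A : ι → Matrix m n R) (v : ι → m) (w : ι → n) :
    piKron A v w = ∏ i, A i (v i) (w i) :=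
  rfl

theorem piKron_mul [DecidableEq ι] [Fintype m] (A : ι → Matrix l m R) (B : ι → Matrix m n R) :
    piKron A * piKron B = piKron fun i => A i * B i := by
  ext v w
  simp only [mul_apply, piKron_apply, Fintype.prod_sum, prod_mul_distrib]

theorem conjTranspose_piKron [StarRing R] (A : ι → Matrix m n R) :
    (piKron A)ᴴ = piKron fun i => (A i)ᴴ := by
  ext v w
  simp [star_prod]

theorem piKron_diagonal [DecidableEq m] (d : ι → m → R) :
    piKron (fun i => diagonal (d i)) = diagonal fun v => ∏ i, d i (v i) := by
  ext v w
  simp [diagonal_apply, Fintype.prod_ite_zero, funext_iff]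

theorem piKron_mulSingle_diagonal [DecidableEq ι] [DecidableEq m] (i : ι) (d : m → R) :
    piKron (Pi.mulSingle i (diagonal d)) = diagonal fun v => d (v i) := by
  have hslot : Pi.mulSingle i (diagonal d) =
      fun j => diagonal (Pi.mulSingle (M := fun _ => m → R) i d j) :=
    funext fun j => (Pi.apply_mulSingle (fun _ => diagonal) (fun _ => diagonal_one) i d j).symm
  rw [hslot, piKron_diagonal]
  congr 1
  funext v
  simp [Pi.mulSingle_apply, ite_apply]

theorem piKron_mulSingle_conj [DecidableEq ι] [Fintype m] [DecidableEq m] {U V : Matrix m m R}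
    (hUV : U * V = 1) (i : ι) (D : Matrix m m R) :
    piKron (fun _ => U) * piKron (Pi.mulSingle i D) * piKron (fun _ => V) =
      piKron (Pi.mulSingle i (U * D * V)) := by
  rw [piKron_mul, piKron_mul]
  congr 1
  funext j
  rcases eq_or_ne j i with rfl | hji
  · simp
  · simp [hji, hUV]

theorem dotProduct_mul_diagonal_mul_conjTranspose [StarRing R] [Fintype m] [Fintype n]
    [DecidableEq n] (u : m → R) (P : Matrix m n R) (d : n → R) :
    u ⬝ᵥ (P * diagonal d * Pᴴ) *ᵥ star u = ∑ x, d x * ((u ᵥ* P) x * star ((u ᵥ* P) x)) := by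
  rw [dotProduct_mulVec, ← vecMul_vecMul, ← dotProduct_mulVec, ← star_vecMul, ← vecMul_vecMul]
  simp only [dotProduct, vecMul_diagonal, Pi.star_apply]
  exact sum_congr rfl fun x _ => by ring

end Matrix

def IsAntisymmetric {ι α R : Type*} [Fintype ι] [DecidableEq ι] [Ring R]
    (u : (ι → α) → R) : Prop :=
  ∀ (v : ι → α) (π : Equiv.Perm ι), u (v ∘ π) = ((Equiv.Perm.sign π : ℤ) : R) * u v

namespace IsAntisymmetric

variable {ι ι' α R : Type*} [Fintype ι] [DecidableEq ι] {u : (ι → α) → R}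

theorem eq_zero_of_not_injective [Ring R] [NoZeroDivisors R] [CharZero R]
    (hu : IsAntisymmetric u) {v : ι → α} (hv : ¬ Injective v) : u v = 0 := by
  obtain ⟨a, b, hab, hne⟩ := not_injective_iff.mp hv
  have hswap : v ∘ Equiv.swap a b = v := by simp [Equiv.comp_swap_eq_update, hab]
  have h := hu v (Equiv.swap a b)
  rw [hswap, Equiv.Perm.sign_swap hne] at h
  exact CharZero.eq_neg_self_iff.mp (by simpa using h)

theorem comp_equiv [Ring R] [Fintype ι'] [DecidableEq ι'] (hu : IsAntisymmetric u) (e : ι ≃ ι') :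
    IsAntisymmetric fun v : ι' → α => u (v ∘ e) := by
  intro v π
  have hcomp : (v ∘ π) ∘ e = (v ∘ e) ∘ e.symm.permCongr π := by
    funext x
    simp [Equiv.permCongr_apply]
  simp only [hcomp, hu (v ∘ e), Equiv.Perm.sign_permCongr]

theorem vecMul_piKron [Fintype α] [CommRing R] (hu : IsAntisymmetric u) (U : Matrix α α R) :
    IsAntisymmetric (u ᵥ* piKron fun _ => U) := by
  intro x π
  simp only [vecMul, dotProduct, piKron_apply, mul_sum]
  rw [← (π.symm.arrowCongr (Equiv.refl α)).sum_comp]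
  refine sum_congr rfl fun w _ => ?_
  change u (w ∘ π) * ∏ i, U (w (π i)) (x (π i)) = _
  rw [hu w π, Equiv.prod_comp π fun i => U (w i) (x i)]
  ring

end IsAntisymmetric

theorem sum_apply_mul_nonneg_of_symmetric {ι α : Type*} [Fintype ι] [DecidableEq ι] [Fintype α]
    [DecidableEq α] {lam : α → ℝ}
    (hlam : ∀ S : Finset α, #S = Fintype.card ι → 0 ≤ ∑ s ∈ S, lam s)
    {g : (ι → α) → ℝ} (hg : ∀ x, 0 ≤ g x) (hg_perm : ∀ x (π : Equiv.Perm ι), g (x ∘ π) = g x)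
    (hg_inj : ∀ x, ¬ Injective x → g x = 0) (i : ι) : 0 ≤ ∑ x, lam (x i) * g x := by
  have hslot (j : ι) : ∑ x, lam (x j) * g x = ∑ x, lam (x i) * g x := by
    rw [← ((Equiv.swap i j).arrowCongr (Equiv.refl α)).sum_comp]
    refine sum_congr rfl fun x _ => ?_
    change lam (x (Equiv.swap i j j)) * g (x ∘ Equiv.swap i j) = _
    rw [Equiv.swap_apply_right, hg_perm]
  have hterm (x : ι → α) : 0 ≤ (∑ j, lam (x j)) * g x := by
    by_cases hx : Injective x
    · refine mul_nonneg ?_ (hg x)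
      rw [← sum_image fun a _ b _ h => hx h]
      exact hlam _ (by rw [card_image_of_injective _ hx, card_univ])
    · simp [hg_inj x hx]
  have hcard : (0 : ℝ) < Fintype.card ι := by exact_mod_cast Fintype.card_pos_iff.mpr ⟨i⟩
  refine nonneg_of_mul_nonneg_right ?_ hcard
  calc 0 ≤ ∑ x, (∑ j, lam (x j)) * g x := sum_nonneg fun x _ => hterm x
    _ = ∑ j, ∑ x, lam (x j) * g x := by simp only [sum_mul]; exact sum_comm
    _ = Fintype.card ι * ∑ x, lam (x i) * g x := by simp [hslot]

theorem IsAntisymmetric.dotProduct_piKron_mulSingle_nonneg {ι n : Type*} [Fintype ι]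
    [DecidableEq ι] [Fintype n] [DecidableEq n] {B : Matrix n n ℂ} (hB : B.IsHermitian)
    (hsum : ∀ S : Finset n, #S = Fintype.card ι → 0 ≤ ∑ s ∈ S, hB.eigenvalues s)
    {u : (ι → n) → ℂ} (hu : IsAntisymmetric u) (i : ι) :
    0 ≤ u ⬝ᵥ piKron (Pi.mulSingle i B) *ᵥ star u := by
  set U : Matrix n n ℂ := (hB.eigenvectorUnitary : Matrix n n ℂ)
  have hUU : U * Uᴴ = 1 := mem_unitaryGroup_iff.mp hB.eigenvectorUnitary.2
  have hB_diag : B = U * diagonal (fun s => (hB.eigenvalues s : ℂ)) * Uᴴ := hB.spectral_theorem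
  have hũ := hu.vecMul_piKron U
  rw [hB_diag, ← piKron_mulSingle_conj hUU, piKron_mulSingle_diagonal, ← conjTranspose_piKron,
    dotProduct_mul_diagonal_mul_conjTranspose]
  have hterm (r : ℝ) (z : ℂ) : (r : ℂ) * (z * star z) = (r * Complex.normSq z : ℝ) := by
    rw [Complex.star_def, Complex.mul_conj, Complex.ofReal_mul]
  simp only [hterm, ← Complex.ofReal_sum, Complex.zero_le_real]
  refine sum_apply_mul_nonneg_of_symmetric hsum (fun x => Complex.normSq_nonneg _) ?_ ?_ i
  · intro x π
    rcases Int.units_eq_one_or (Equiv.Perm.sign π) with h | h <;>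
      simp [hũ x π, h, Complex.normSq_neg]
  · intro x hx
    simp [hũ.eq_zero_of_not_injective hx]

theorem sum_cons_mul_star_eq_dotProduct_piKron {p : ℕ} {α R : Type*} [Fintype α] [DecidableEq α]
    [CommSemiring R] [StarRing R] (B : Matrix α α R) (u : (Fin (p + 1) → α) → R) :
    ∑ K : Fin p → α, ∑ j, ∑ k, B j k * u (Fin.cons j K) * star (u (Fin.cons k K)) =
      u ⬝ᵥ piKron (Pi.mulSingle 0 B) *ᵥ star u := by
  have hsplit (f : (Fin (p + 1) → α) → R) : ∑ v, f v = ∑ j, ∑ K, f (Fin.cons j K) := by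
    rw [← (Fin.consEquiv fun _ => α).sum_comp, Fintype.sum_prod_type]
    rfl
  have hentry (j k : α) (K L : Fin p → α) :
      piKron (Pi.mulSingle 0 B) (Fin.cons j K) (Fin.cons k L) = if K = L then B j k else 0 := by
    simp [Fin.prod_univ_succ, one_apply, Fintype.prod_boole, funext_iff]
  simp only [dotProduct, mulVec, hsplit, hentry, Pi.star_apply, ite_mul, zero_mul, mul_ite,
    mul_zero, sum_ite_eq, mem_univ, if_true, mul_sum]
  rw [sum_comm]
  exact sum_congr rfl fun K _ => sum_congr rfl fun j _ => sum_congr rfl fun k _ => by ring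

theorem levi_form_nonneg_on_alternating_general
    {n : ℕ} (q : ℕ) (hq1 : 1 ≤ q)
    (B : Matrix (Fin n) (Fin n) ℂ) (hB : B.IsHermitian)
    (hsum : ∀ S : Finset (Fin n), S.card = q → 0 ≤ ∑ i ∈ S, hB.eigenvalues i)
    (u : (Fin q → Fin n) → ℂ)
    (halt : ∀ (v : Fin q → Fin n) (π : Equiv.Perm (Fin q)),
      u (v ∘ π) = ((Equiv.Perm.sign π : ℤ) : ℂ) * u v) :
    (∑ K : Fin (q - 1) → Fin n, ∑ j : Fin n, ∑ k : Fin n,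
        B j k * u (Fin.cons j K ∘ Fin.cast (Nat.succ_pred_eq_of_pos hq1).symm)
          * conj (u (Fin.cons k K ∘ Fin.cast (Nat.succ_pred_eq_of_pos hq1).symm))).im = 0 ∧
      0 ≤ (∑ K : Fin (q - 1) → Fin n, ∑ j : Fin n, ∑ k : Fin n,
        B j k * u (Fin.cons j K ∘ Fin.cast (Nat.succ_pred_eq_of_pos hq1).symm)
          * conj (u (Fin.cons k K ∘ Fin.cast (Nat.succ_pred_eq_of_pos hq1).symm))).re := by
  have hu : IsAntisymmetric u := halt
  have hu' := hu.comp_equiv (finCongr (Nat.succ_pred_eq_of_pos hq1).symm)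
  have hnonneg :=
    hu'.dotProduct_piKron_mulSingle_nonneg hB (fun S hS => hsum S (by simp [hS]; omega)) 0
  rw [← sum_cons_mul_star_eq_dotProduct_piKron] at hnonneg
  obtain ⟨hre, him⟩ := Complex.nonneg_iff.mp hnonneg
  exact ⟨him.symm, hre⟩

/-- If `B` is an `n × n` Hermitian matrix such that the sum of any `q` of its eigenvalues
(counted with multiplicity) is nonnegative, then the Hermitian form
`Σ_K Σ_{j,k} B_{jk} u_{jK} conj(u_{kK})` is real and nonnegative on alternating
`q`-tuples of coefficients `u`. -/
theorem levi_form_nonneg_on_alternating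
    {n : ℕ} (hn : 1 ≤ n) (q : ℕ) (hq1 : 1 ≤ q) (hqn : q ≤ n)
    (B : Matrix (Fin n) (Fin n) ℂ) (hB : B.IsHermitian)
    (hsum : ∀ S : Finset (Fin n), S.card = q → 0 ≤ ∑ i ∈ S, hB.eigenvalues i)
    (u : (Fin q → Fin n) → ℂ)
    (halt : ∀ (v : Fin q → Fin n) (π : Equiv.Perm (Fin q)),
      u (v ∘ π) = ((Equiv.Perm.sign π : ℤ) : ℂ) * u v)
    (hzero : ∀ v : Fin q → Fin n, ¬ Function.Injective v → u v = 0) :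
    (∑ K : Fin (q - 1) → Fin n, ∑ j : Fin n, ∑ k : Fin n,
        B j k * u (Fin.cons j K ∘ Fin.cast (Nat.succ_pred_eq_of_pos hq1).symm)
          * conj (u (Fin.cons k K ∘ Fin.cast (Nat.succ_pred_eq_of_pos hq1).symm))).im = 0 ∧
      0 ≤ (∑ K : Fin (q - 1) → Fin n, ∑ j : Fin n, ∑ k : Fin n,
        B j k * u (Fin.cons j K ∘ Fin.cast (Nat.succ_pred_eq_of_pos hq1).symm)
          * conj (u (Fin.cons k K ∘ Fin.cast (Nat.succ_pred_eq_of_pos hq1).symm))).re :=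
  levi_form_nonneg_on_alternating_general q hq1 B hB hsum u halt
end

section
/- Let X, Y, W be complex Hilbert spaces, let T : X → Y be a bounded linear operator, and let K : X → W be a compact injective bounded linear operator. Then T is compact if and only if for every ε > 0 there exists a constant C_ε ≥ 0 such that ‖T x‖ ≤ ε‖x‖ + C_ε‖K x‖ for all x ∈ X. -/
/-!
If the estimate fails for some `ε`, there are unit vectors `uₙ` with `‖T uₙ‖ > ε + n ‖K uₙ‖`,
so `K uₙ → 0`. Since `K` is injective, `K†` has dense range, and `⟪K† w, uₙ⟫ = ⟪w, K uₙ⟫ → 0`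
then makes `uₙ` weakly null. A compact operator maps bounded weakly null sequences to norm null
ones, contradicting `‖T uₙ‖ > ε`.

Conversely, on the unit ball the estimate reads `‖T x - T y‖ ≤ 2ε + C ‖K x - K y‖`, so the image
of the ball under `T` inherits total boundedness from its image under `K`.
-/

open Filter Topology Metric Set
open scoped InnerProductSpace InnerProduct

theorem totallyBounded_image_of_forall_dist_lt {α β γ : Type*} [PseudoMetricSpace β]
    [PseudoMetricSpace γ] {f : α → β} {g : α → γ} {s : Set α} (hg : TotallyBounded (g '' s))
    (hfg : ∀ δ > 0, ∃ η > 0, ∀ x ∈ s, ∀ y ∈ s, dist (g x) (g y) < η → dist (f x) (f y) < δ) :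
    TotallyBounded (f '' s) := by
  rw [totallyBounded_iff]
  intro δ hδ
  obtain ⟨η, hη, hcontrol⟩ := hfg δ hδ
  obtain ⟨t, hts, ht, hcover⟩ := exists_subset_image_finite_and.1
    (finite_approx_of_totallyBounded hg η hη)
  refine ⟨f '' t, ht.image f, ?_⟩
  rintro _ ⟨x, hx, rfl⟩
  obtain ⟨_, ⟨z, hz, rfl⟩, hxz⟩ := mem_iUnion₂.1 (hcover (mem_image_of_mem g hx))
  exact mem_iUnion₂.2 ⟨f z, mem_image_of_mem f hz, hcontrol x hx z (hts hz) hxz⟩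

theorem isCompactOperator_of_forall_norm_le {𝕜 E F G : Type*} [NontriviallyNormedField 𝕜]
    [NormedAddCommGroup E] [NormedSpace 𝕜 E] [NormedAddCommGroup F] [NormedSpace 𝕜 F]
    [CompleteSpace F] [NormedAddCommGroup G] [NormedSpace 𝕜 G] {T : E →L[𝕜] F} {K : E →L[𝕜] G}
    (hK : IsCompactOperator K)
    (hTK : ∀ ε > (0 : ℝ), ∃ C ≥ (0 : ℝ), ∀ x, ‖T x‖ ≤ ε * ‖x‖ + C * ‖K x‖) :
    IsCompactOperator T := by
  rw [← T.coe_coe, isCompactOperator_iff_isCompact_closure_image_closedBall (T : E →ₗ[𝕜] F) one_pos]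
  refine (totallyBounded_closure.2 ?_).isCompact_of_isClosed isClosed_closure
  obtain ⟨M, hM, hKM⟩ := hK.image_closedBall_subset_compact (f := (K : E →ₗ[𝕜] G)) 1
  refine totallyBounded_image_of_forall_dist_lt (g := K) (hM.totallyBounded.subset hKM) ?_
  intro δ hδ
  obtain ⟨C, hC, hTKδ⟩ := hTK (δ / 4) (by positivity)
  refine ⟨δ / (2 * (C + 1)), by positivity, fun x hx y hy hxy => ?_⟩
  have hxy' : ‖x - y‖ ≤ 2 := by
    rw [mem_closedBall_zero_iff] at hx hy
    linarith [norm_sub_le x y]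
  have hCη : C * (δ / (2 * (C + 1))) < δ / 2 := by
    rw [mul_div_assoc', div_lt_div_iff₀ (by positivity) two_pos]
    nlinarith
  rw [dist_eq_norm, ← map_sub] at hxy ⊢
  calc ‖T (x - y)‖ ≤ δ / 4 * ‖x - y‖ + C * ‖K (x - y)‖ := hTKδ _
    _ ≤ δ / 4 * 2 + C * (δ / (2 * (C + 1))) := by gcongr
    _ < δ := by linarith

theorem norm_le_of_forall_norm_eq_one {𝕜 E F G : Type*} [RCLike 𝕜]
    [NormedAddCommGroup E] [NormedSpace 𝕜 E] [NormedAddCommGroup F] [NormedSpace 𝕜 F]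
    [NormedAddCommGroup G] [NormedSpace 𝕜 G] {T : E →L[𝕜] F} {K : E →L[𝕜] G} {ε C : ℝ}
    (h : ∀ u, ‖u‖ = 1 → ‖T u‖ ≤ ε + C * ‖K u‖) (x : E) :
    ‖T x‖ ≤ ε * ‖x‖ + C * ‖K x‖ := by
  rcases eq_or_ne x 0 with rfl | hx
  · simp
  have hx' : 0 < ‖x‖ := norm_pos_iff.2 hx
  have hu := h ((‖x‖⁻¹ : 𝕜) • x) (by simp [norm_smul, hx'.ne'])
  simp only [map_smul, norm_smul, norm_inv, RCLike.norm_ofReal, abs_norm] at hu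
  calc ‖T x‖ = ‖x‖ * (‖x‖⁻¹ * ‖T x‖) := by field_simp
    _ ≤ ‖x‖ * (ε + C * (‖x‖⁻¹ * ‖K x‖)) := by gcongr
    _ = ε * ‖x‖ + C * ‖K x‖ := by field_simp

section Hilbert

variable {𝕜 E F G : Type*} [RCLike 𝕜]
  [NormedAddCommGroup E] [InnerProductSpace 𝕜 E] [NormedAddCommGroup F] [InnerProductSpace 𝕜 F]
  [NormedAddCommGroup G] [InnerProductSpace 𝕜 G]

theorem ContinuousLinearMap.denseRange_adjoint_of_injective [CompleteSpace E] [CompleteSpace F]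
    {K : E →L[𝕜] F} (hK : Function.Injective K) : DenseRange (K†) := by
  have hperp : (LinearMap.range (K† : F →ₗ[𝕜] E))ᗮ = ⊥ := by
    have := K†.orthogonal_range
    rw [ContinuousLinearMap.adjoint_adjoint] at this
    simpa [LinearMap.ker_eq_bot.2 hK] using this
  have := Submodule.dense_iff_topologicalClosure_eq_top.2
    (Submodule.topologicalClosure_eq_top_iff.2 hperp)
  rwa [LinearMap.coe_range, ContinuousLinearMap.coe_coe] at this

theorem tendsto_inner_zero_of_denseRange {ι H : Type*} {l : Filter ι} {u : ι → E} {R : ℝ}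
    (hu : ∀ i, ‖u i‖ ≤ R) {f : H → E} (hf : DenseRange f)
    (h : ∀ w, Tendsto (fun i => ⟪f w, u i⟫_𝕜) l (𝓝 0)) (v : E) :
    Tendsto (fun i => ⟪v, u i⟫_𝕜) l (𝓝 0) := by
  have hlip (i : ι) : LipschitzWith R.toNNReal (fun v : E => ⟪v, u i⟫_𝕜) := by
    refine LipschitzWith.of_dist_le_mul fun v w => ?_
    rw [dist_eq_norm, dist_eq_norm, ← inner_sub_left,
      Real.coe_toNNReal _ ((norm_nonneg _).trans (hu i)), mul_comm]
    exact (norm_inner_le_norm _ _).trans (mul_le_mul_of_nonneg_left (hu i) (norm_nonneg _))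
  have hclosed : IsClosed {v : E | Tendsto (fun i => ⟪v, u i⟫_𝕜) l (𝓝 0)} :=
    (LipschitzWith.uniformEquicontinuous _ _ hlip).equicontinuous.isClosed_setOfPred_tendsto
      continuous_const
  exact hf.induction_on v hclosed h

theorem IsCompactOperator.tendsto_zero_of_tendsto_inner [CompleteSpace E] [CompleteSpace F]
    {T : E →L[𝕜] F} (hT : IsCompactOperator T) {u : ℕ → E} {R : ℝ} (hu : ∀ n, ‖u n‖ ≤ R)
    (hweak : ∀ v, Tendsto (fun n => ⟪v, u n⟫_𝕜) atTop (𝓝 0)) :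
    Tendsto (fun n => T (u n)) atTop (𝓝 0) := by
  obtain ⟨M, hM, hTM⟩ := hT.image_closedBall_subset_compact (f := (T : E →ₗ[𝕜] F)) R
  refine tendsto_of_subseq_tendsto fun ns hns => ?_
  obtain ⟨y, -, φ, hφ, hy⟩ := hM.tendsto_subseq fun n =>
    hTM ⟨u (ns n), mem_closedBall_zero_iff.2 (hu _), rfl⟩
  suffices y = 0 from ⟨φ, this ▸ hy⟩
  have hyy : Tendsto (fun n => ⟪(T†) y, u (ns (φ n))⟫_𝕜) atTop (𝓝 ⟪y, y⟫_𝕜) := by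
    simpa [ContinuousLinearMap.adjoint_inner_left] using
      (tendsto_const_nhds (x := y)).inner (𝕜 := 𝕜) hy
  exact inner_self_eq_zero.1
    (tendsto_nhds_unique hyy ((hweak _).comp (hns.comp hφ.tendsto_atTop)))

theorem IsCompactOperator.exists_forall_norm_le [CompleteSpace E] [CompleteSpace F]
    [CompleteSpace G] {T : E →L[𝕜] F} {K : E →L[𝕜] G} (hT : IsCompactOperator T)
    (hK : Function.Injective K) {ε : ℝ} (hε : 0 < ε) :
    ∃ C ≥ (0 : ℝ), ∀ x, ‖T x‖ ≤ ε * ‖x‖ + C * ‖K x‖ := by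
  by_contra! h
  have hbad : ∀ n : ℕ, ∃ u : E, ‖u‖ = 1 ∧ ε + n * ‖K u‖ < ‖T u‖ := fun n => by
    by_contra! hn
    obtain ⟨x, hx⟩ := h n n.cast_nonneg
    exact hx.not_ge (norm_le_of_forall_norm_eq_one hn x)
  choose u hu_norm hu_lt using hbad
  have hKu : Tendsto (fun n => K (u n)) atTop (𝓝 0) := by
    refine squeeze_zero_norm' (eventually_atTop.2 ⟨1, fun n hn => ?_⟩)
      (tendsto_const_div_atTop_nhds_zero_nat ‖T‖)
    rw [le_div_iff₀ (by exact_mod_cast hn), mul_comm]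
    have := T.le_opNorm (u n)
    rw [hu_norm, mul_one] at this
    linarith [hu_lt n]
  have hweak := tendsto_inner_zero_of_denseRange (𝕜 := 𝕜) (fun n => (hu_norm n).le)
    (ContinuousLinearMap.denseRange_adjoint_of_injective hK) fun w => by
      simpa [ContinuousLinearMap.adjoint_inner_left] using
        (tendsto_const_nhds (x := w)).inner (𝕜 := 𝕜) hKu
  have hTu := (hT.tendsto_zero_of_tendsto_inner (fun n => (hu_norm n).le) hweak).norm
  rw [norm_zero] at hTu
  obtain ⟨n, hn⟩ := (hTu.eventually (gt_mem_nhds hε)).exists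
  linarith [hu_lt n, mul_nonneg n.cast_nonneg (norm_nonneg (K (u n)))]

end Hilbert

/-- A bounded operator `T` between complex Hilbert spaces is compact if and only if for
every `ε > 0` there is `C_ε ≥ 0` with `‖T x‖ ≤ ε ‖x‖ + C_ε ‖K x‖`, where `K` is a compact
injective bounded operator. -/
theorem isCompactOperator_iff_compactness_estimates
    {X Y W : Type*}
    [NormedAddCommGroup X] [InnerProductSpace ℂ X] [CompleteSpace X]
    [NormedAddCommGroup Y] [InnerProductSpace ℂ Y] [CompleteSpace Y]
    [NormedAddCommGroup W] [InnerProductSpace ℂ W] [CompleteSpace W]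
    (T : X →L[ℂ] Y) (K : X →L[ℂ] W)
    (hK_compact : IsCompactOperator (⇑K))
    (hK_inj : Function.Injective (⇑K)) :
    IsCompactOperator (⇑T) ↔
      ∀ ε > (0 : ℝ), ∃ C ≥ (0 : ℝ), ∀ x : X, ‖T x‖ ≤ ε * ‖x‖ + C * ‖K x‖ :=
  ⟨fun hT _ hε => hT.exists_forall_norm_le hK_inj hε,
    isCompactOperator_of_forall_norm_le hK_compact⟩
end

section
/- Let H₀ and H₁ be complex Hilbert spaces and let T be a closed, densely defined linear operator from H₀ to H₁ with closed range, with Hilbert-space adjoint T*. Suppose S : H₁ → H₀ is a bounded operator such that S y = 0 for every y orthogonal to Ran(T), and for every y ∈ Ran(T): S y ∈ dom(T), S y ⊥ ker(T), and T(S y) = y. Suppose S' : H₀ → H₁ is a bounded operator such that S' x = 0 for every x orthogonal to Ran(T*), and for every x ∈ Ran(T*): S' x ∈ dom(T*), S' x ⊥ ker(T*), and T*(S' x) = x. Then S' equals the Hilbert-space adjoint S* of S; in particular, S is compact if and only if S' is compact. -/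
/-!
Write `R = Ran T` and `R' = Ran T*`. For `x ∈ R'` and `y ∈ R`,
`⟪S' x, y⟫ = ⟪S' x, T S y⟫ = ⟪T* S' x, S y⟫ = ⟪x, S y⟫`. When `x ∈ R'ᗮ` or `y ∈ Rᗮ` both sides
vanish: `Rᗮ ⊆ ker T*`, and `S y ∈ R'` because `S y = T* (S* S y)`. Since a vector orthogonal to
both `K` and `Kᗮ` is zero, these four cases force `S' = S*`.
Compactness passes to adjoints through `‖S* x‖² ≤ ‖x‖ ‖S S* x‖`.
-/

open Metric Set

open scoped InnerProduct InnerProductSpace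

section TotallyBounded

variable {α β γ : Type*} [PseudoMetricSpace β] [PseudoMetricSpace γ]

theorem TotallyBounded.image_of_dist_lt {f : α → β} {g : α → γ} {s : Set α}
    (hg : TotallyBounded (g '' s))
    (hfg : ∀ ε > 0, ∃ δ > 0, ∀ a ∈ s, ∀ b ∈ s, dist (g a) (g b) < δ → dist (f a) (f b) < ε) :
    TotallyBounded (f '' s) := by
  rw [Metric.totallyBounded_iff]
  intro ε hε
  obtain ⟨δ, hδ, hfg⟩ := hfg ε hε
  obtain ⟨t, hts, ht, hcover⟩ :=
    exists_subset_image_finite_and.mp (finite_approx_of_totallyBounded hg δ hδ)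
  refine ⟨f '' t, ht.image f, ?_⟩
  rintro _ ⟨a, ha, rfl⟩
  obtain ⟨b, hb, hab⟩ : ∃ b ∈ t, g a ∈ ball (g b) δ := by
    simpa using hcover (mem_image_of_mem g ha)
  exact mem_biUnion (mem_image_of_mem f hb) (hfg a ha b (hts hb) hab)

end TotallyBounded

section CompactOperator

variable {𝕜 E F : Type*} [RCLike 𝕜]
  [NormedAddCommGroup E] [InnerProductSpace 𝕜 E] [CompleteSpace E]
  [NormedAddCommGroup F] [InnerProductSpace 𝕜 F] [CompleteSpace F]

theorem isCompactOperator_of_isCompactOperator_adjoint_comp_self {A : E →L[𝕜] F}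
    (hA : IsCompactOperator (A† ∘L A)) : IsCompactOperator A := by
  have hsq : ∀ x, ‖A x‖ ^ 2 ≤ ‖x‖ * ‖(A† ∘L A) x‖ := fun x => by
    rw [A.apply_norm_sq_eq_inner_adjoint_right]
    exact re_inner_le_norm _ _
  have hK : TotallyBounded ((A† ∘L A) '' closedBall 0 1) :=
    (hA.isCompact_closure_image_closedBall (f := (A† ∘L A : E →ₗ[𝕜] E)) 1).totallyBounded.subset
      subset_closure
  refine (isCompactOperator_iff_exists_mem_nhds_isCompact_closure_image _).mpr
    ⟨closedBall 0 1, closedBall_mem_nhds 0 one_pos, ?_⟩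
  refine (hK.image_of_dist_lt fun ε hε => ⟨ε ^ 2 / 2, by positivity, ?_⟩).closure
    |>.isCompact_of_isClosed isClosed_closure
  intro a ha b hb hab
  rw [mem_closedBall_zero_iff] at ha hb
  rw [dist_eq_norm] at hab ⊢
  have hdiff : ‖a - b‖ ≤ 2 := (norm_sub_le a b).trans (by linarith)
  have : ‖A a - A b‖ ^ 2 < ε ^ 2 := calc
    ‖A a - A b‖ ^ 2 ≤ ‖a - b‖ * ‖(A† ∘L A) a - (A† ∘L A) b‖ := by
      simpa only [map_sub] using hsq (a - b)
    _ ≤ 2 * ‖(A† ∘L A) a - (A† ∘L A) b‖ := by gcongr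
    _ < ε ^ 2 := by linarith
  exact (pow_lt_pow_iff_left₀ (norm_nonneg _) hε.le two_ne_zero).mp this

theorem IsCompactOperator.adjoint {S : E →L[𝕜] F} (hS : IsCompactOperator S) :
    IsCompactOperator (S†) :=
  isCompactOperator_of_isCompactOperator_adjoint_comp_self <| by
    rw [ContinuousLinearMap.adjoint_adjoint, ContinuousLinearMap.coe_comp]
    exact hS.comp_clm (S†)

theorem isCompactOperator_adjoint_iff {S : E →L[𝕜] F} :
    IsCompactOperator (S†) ↔ IsCompactOperator S :=
  ⟨fun h => by simpa only [ContinuousLinearMap.adjoint_adjoint] using h.adjoint,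
    IsCompactOperator.adjoint⟩

end CompactOperator

section OrthogonalExt

variable {𝕜 E F : Type*} [RCLike 𝕜]
  [NormedAddCommGroup E] [InnerProductSpace 𝕜 E]
  [NormedAddCommGroup F] [InnerProductSpace 𝕜 F]

theorem Submodule.ext_inner_right_of_orthogonal (K : Submodule 𝕜 E) {u v : E}
    (hK : ∀ y ∈ K, ⟪u, y⟫_𝕜 = ⟪v, y⟫_𝕜) (hKperp : ∀ y ∈ Kᗮ, ⟪u, y⟫_𝕜 = ⟪v, y⟫_𝕜) : u = v := by
  have hK' : u - v ∈ Kᗮ := (K.mem_orthogonal' _).mpr fun y hy => by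
    rw [inner_sub_left, hK y hy, sub_self]
  have hKperp' : u - v ∈ Kᗮᗮ := (Kᗮ.mem_orthogonal' _).mpr fun y hy => by
    rw [inner_sub_left, hKperp y hy, sub_self]
  exact sub_eq_zero.mp (Submodule.disjoint_def.mp Kᗮ.orthogonal_disjoint _ hK' hKperp')

theorem ContinuousLinearMap.ext_of_orthogonal [CompleteSpace E] [CompleteSpace F]
    (K : Submodule 𝕜 E) {A B : E →L[𝕜] F}
    (hK : ∀ x ∈ K, A x = B x) (hKperp : ∀ x ∈ Kᗮ, A x = B x) : A = B := by
  suffices (A - B)† = 0 by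
    rw [← sub_eq_zero, ← (A - B).adjoint_adjoint, this, map_zero]
  ext w
  refine K.ext_inner_right_of_orthogonal (fun x hx => ?_) (fun x hx => ?_) <;>
    simp only [adjoint_inner_left, sub_apply, zero_apply, inner_zero_left, hK, hKperp, hx,
      sub_self, inner_zero_right]

end OrthogonalExt

namespace LinearPMap

variable {𝕜 E F : Type*} [RCLike 𝕜]
  [NormedAddCommGroup E] [InnerProductSpace 𝕜 E]
  [NormedAddCommGroup F] [InnerProductSpace 𝕜 F]

abbrev ker (T : E →ₗ.[𝕜] F) : Submodule 𝕜 E :=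
  (LinearMap.ker T.toFun).map T.domain.subtype

theorem orthogonal_range_le_ker_adjoint [CompleteSpace E] {T : E →ₗ.[𝕜] F}
    (hT : Dense (T.domain : Set E)) : (LinearMap.range T.toFun)ᗮ ≤ T†.ker := by
  intro y hy
  have hy0 : ∀ z : T.domain, ⟪(0 : E), z⟫_𝕜 = ⟪y, T z⟫_𝕜 := fun z => by
    rw [inner_zero_left]
    exact (Submodule.inner_left_of_mem_orthogonal (LinearMap.mem_range_self _ z) hy).symm
  exact ⟨⟨y, mem_adjoint_domain_of_exists y ⟨0, hy0⟩⟩, adjoint_apply_eq hT ⟨y, _⟩ hy0, rfl⟩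

structure IsCanonicalSolutionOperator (T : E →ₗ.[𝕜] F) (S : F →L[𝕜] E) : Prop where
  apply_eq_zero : ∀ y ∈ (LinearMap.range T.toFun)ᗮ, S y = 0
  solves : ∀ y ∈ LinearMap.range T.toFun,
    ∃ hy : S y ∈ T.domain, S y ∈ T.kerᗮ ∧ T ⟨S y, hy⟩ = y

namespace IsCanonicalSolutionOperator

variable {T : E →ₗ.[𝕜] F} {S : F →L[𝕜] E} (hS : T.IsCanonicalSolutionOperator S)
include hS

theorem sub_apply_mem_ker (z : T.domain) : (z : E) - S (T z) ∈ T.ker := by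
  obtain ⟨hz, -, hTz⟩ := hS.solves (T z) ⟨z, rfl⟩
  exact ⟨z - ⟨S (T z), hz⟩, by
    change T (z - _) = 0
    rw [LinearPMap.map_sub, hTz, sub_self], rfl⟩

theorem inner_apply_apply_eq {v : E} (hv : v ∈ T.kerᗮ) (z : T.domain) :
    ⟪v, S (T z)⟫_𝕜 = ⟪v, (z : E)⟫_𝕜 := by
  rw [← sub_eq_zero, ← inner_sub_right, ← neg_sub, inner_neg_right,
    Submodule.inner_left_of_mem_orthogonal (hS.sub_apply_mem_ker z) hv, neg_zero]

theorem apply_mem_range_adjoint [CompleteSpace E] [CompleteSpace F]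
    (hT : Dense (T.domain : Set E)) {y : F} (hy : y ∈ LinearMap.range T.toFun) :
    S y ∈ LinearMap.range T†.toFun := by
  obtain ⟨-, hperp, -⟩ := hS.solves y hy
  have hSy : ∀ z : T.domain, ⟪S y, (z : E)⟫_𝕜 = ⟪(S†) (S y), T z⟫_𝕜 := fun z => by
    rw [ContinuousLinearMap.adjoint_inner_left, hS.inner_apply_apply_eq hperp]
  exact ⟨⟨_, mem_adjoint_domain_of_exists _ ⟨S y, hSy⟩⟩, adjoint_apply_eq hT ⟨_, _⟩ hSy⟩

theorem inner_apply_eq_inner_apply [CompleteSpace E] (hT : Dense (T.domain : Set E))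
    {S' : E →L[𝕜] F} (hS' : T†.IsCanonicalSolutionOperator S') {x : E} {y : F}
    (hx : x ∈ LinearMap.range T†.toFun) (hy : y ∈ LinearMap.range T.toFun) :
    ⟪S' x, y⟫_𝕜 = ⟪x, S y⟫_𝕜 := by
  obtain ⟨hx', -, hT'S'x⟩ := hS'.solves x hx
  obtain ⟨hy', -, hTSy⟩ := hS.solves y hy
  have := adjoint_isFormalAdjoint hT ⟨S' x, hx'⟩ ⟨S y, hy'⟩
  rw [hT'S'x, hTSy] at this
  exact this.symm

theorem adjoint_eq [CompleteSpace E] [CompleteSpace F] (hT : Dense (T.domain : Set E))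
    {S' : E →L[𝕜] F} (hS' : T†.IsCanonicalSolutionOperator S') : S' = S† := by
  refine ContinuousLinearMap.ext_of_orthogonal (LinearMap.range T†.toFun)
    (fun x hx => ?_) (fun x hx => ?_) <;>
  refine (LinearMap.range T.toFun).ext_inner_right_of_orthogonal
    (fun y hy => ?_) (fun y hy => ?_) <;>
  rw [ContinuousLinearMap.adjoint_inner_left]
  · exact hS.inner_apply_eq_inner_apply hT hS' hx hy
  · rw [hS.apply_eq_zero y hy, inner_zero_right]
    exact Submodule.inner_left_of_mem_orthogonal (orthogonal_range_le_ker_adjoint hT hy)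
      (hS'.solves x hx).2.1
  · rw [hS'.apply_eq_zero x hx, inner_zero_left]
    exact (Submodule.inner_left_of_mem_orthogonal (hS.apply_mem_range_adjoint hT hy) hx).symm
  · rw [hS'.apply_eq_zero x hx, hS.apply_eq_zero y hy, inner_zero_left, inner_zero_right]

end IsCanonicalSolutionOperator

end LinearPMap

theorem canonical_solution_operators_adjoint_general
    {H₀ H₁ : Type*}
    [NormedAddCommGroup H₀] [InnerProductSpace ℂ H₀] [CompleteSpace H₀]
    [NormedAddCommGroup H₁] [InnerProductSpace ℂ H₁] [CompleteSpace H₁]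
    (T : H₀ →ₗ.[ℂ] H₁)
    (hdense : Dense (T.domain : Set H₀))
    (S : H₁ →L[ℂ] H₀)
    (hS_zero : ∀ y ∈ (LinearMap.range T.toFun)ᗮ, S y = 0)
    (hS_sol : ∀ y ∈ LinearMap.range T.toFun,
      ∃ hy : S y ∈ T.domain,
        S y ∈ ((LinearMap.ker T.toFun).map T.domain.subtype)ᗮ ∧
        T ⟨S y, hy⟩ = y)
    (S' : H₀ →L[ℂ] H₁)
    (hS'_zero : ∀ x ∈ (LinearMap.range T.adjoint.toFun)ᗮ, S' x = 0)
    (hS'_sol : ∀ x ∈ LinearMap.range T.adjoint.toFun,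
      ∃ hx : S' x ∈ T.adjoint.domain,
        S' x ∈ ((LinearMap.ker T.adjoint.toFun).map T.adjoint.domain.subtype)ᗮ ∧
        T.adjoint ⟨S' x, hx⟩ = x) :
    S' = ContinuousLinearMap.adjoint S ∧
      (IsCompactOperator (⇑S) ↔ IsCompactOperator (⇑S')) := by
  have hS'_eq : S' = S† :=
    LinearPMap.IsCanonicalSolutionOperator.adjoint_eq ⟨hS_zero, hS_sol⟩ hdense
      ⟨hS'_zero, hS'_sol⟩
  exact ⟨hS'_eq, hS'_eq ▸ isCompactOperator_adjoint_iff.symm⟩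

/-- The canonical solution operator `S` of a closed, densely defined operator `T` with
closed range and the canonical solution operator `S'` of its adjoint `T†` are adjoints of
each other: `S' = S*`; in particular `S` is compact iff `S'` is compact. -/
theorem canonical_solution_operators_adjoint
    {H₀ H₁ : Type*}
    [NormedAddCommGroup H₀] [InnerProductSpace ℂ H₀] [CompleteSpace H₀]
    [NormedAddCommGroup H₁] [InnerProductSpace ℂ H₁] [CompleteSpace H₁]
    (T : H₀ →ₗ.[ℂ] H₁)
    (hdense : Dense (T.domain : Set H₀))
    (hclosed : T.IsClosed)
    (hrange : IsClosed ((LinearMap.range T.toFun : Submodule ℂ H₁) : Set H₁))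
    (S : H₁ →L[ℂ] H₀)
    (hS_zero : ∀ y ∈ (LinearMap.range T.toFun)ᗮ, S y = 0)
    (hS_sol : ∀ y ∈ LinearMap.range T.toFun,
      ∃ hy : S y ∈ T.domain,
        S y ∈ ((LinearMap.ker T.toFun).map T.domain.subtype)ᗮ ∧
        T ⟨S y, hy⟩ = y)
    (S' : H₀ →L[ℂ] H₁)
    (hS'_zero : ∀ x ∈ (LinearMap.range T.adjoint.toFun)ᗮ, S' x = 0)
    (hS'_sol : ∀ x ∈ LinearMap.range T.adjoint.toFun,
      ∃ hx : S' x ∈ T.adjoint.domain,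
        S' x ∈ ((LinearMap.ker T.adjoint.toFun).map T.adjoint.domain.subtype)ᗮ ∧
        T.adjoint ⟨S' x, hx⟩ = x) :
    S' = ContinuousLinearMap.adjoint S ∧
      (IsCompactOperator (⇑S) ↔ IsCompactOperator (⇑S')) :=
  canonical_solution_operators_adjoint_general T hdense S hS_zero hS_sol S' hS'_zero hS'_sol
end

section
/- Let H₀, H₁, W be complex Hilbert spaces, let T be a closed, densely defined linear operator from H₀ to H₁ with closed range, let S : H₁ → H₀ be the canonical solution operator of T (i.e. a bounded operator with S y = 0 for every y orthogonal to Ran(T), and for every y ∈ Ran(T): S y ∈ dom(T), S y ⊥ ker(T), and T(S y) = y), and let ι : H₀ → W be a compact injective bounded linear operator. Then S is compact if and only if for every ε > 0 there exists a constant C_ε ≥ 0 such that ‖u‖ ≤ ε‖T u‖ + C_ε‖ι u‖ for every u ∈ dom(T) with u ⊥ ker(T). -/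
/-!
The set `S '' closedBall 0 1` is exactly `{u ∈ dom T ∩ (ker T)ᗮ | ‖T u‖ ≤ 1}`, because `S (T u) = u`
on `dom T ∩ (ker T)ᗮ` and `S` factors through the orthogonal projection onto the closed range.
If its closure is compact, `‖ι ·‖` attains a positive minimum `m` on the intersection with the
sphere of radius `ε`; rescaling an arbitrary `u` onto that sphere gives the estimate with
`C_ε = ε / m`. Conversely `ι` maps this bounded set to a totally bounded one, and the estimate
applied to differences gives `‖u - u'‖ ≤ 2ε + C_ε ‖ι u - ι u'‖` on it, so it is totally bounded.
-/

open Metric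

universe u

theorem totallyBounded_of_dist_le_add_mul_dist {X : Type u} {Y : Type*} [PseudoMetricSpace X]
    [PseudoMetricSpace Y] {A : Set X} {f : X → Y} (hf : TotallyBounded (f '' A))
    (h : ∀ δ > 0, ∃ C ≥ 0, ∀ x ∈ A, ∀ y ∈ A, dist x y ≤ δ + C * dist (f x) (f y)) :
    TotallyBounded A := by
  refine totallyBounded_of_finite_discretization fun ε hε ↦ ?_
  obtain ⟨C, hC, hCA⟩ := h (ε / 2) (half_pos hε)
  have hr : 0 < ε / (4 * (C + 1)) := by positivity
  obtain ⟨t, ht, hcover⟩ := totallyBounded_iff.mp hf _ hr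
  have hcenter : ∀ x : A, ∃ w : t, dist (f x) w < ε / (4 * (C + 1)) := fun x ↦ by
    obtain ⟨w, hw, hxw⟩ := Set.mem_iUnion₂.mp (hcover ⟨x, x.2, rfl⟩)
    exact ⟨⟨w, hw⟩, hxw⟩
  choose F hF using hcenter
  have := ht.fintype
  -- the discretization must take values in a type of `X`'s universe
  refine ⟨ULift (Fin (Fintype.card t)), inferInstance, fun x ↦ ⟨Fintype.equivFin t (F x)⟩,
    fun x y hxy ↦ ?_⟩
  have hfxy : dist (f x) (f y) < ε / (2 * (C + 1)) := by
    calc dist (f x) (f y) ≤ dist (f x) (F x) + dist (f y) (F y) := by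
          rw [(Fintype.equivFin t).injective (ULift.up_inj.mp hxy)]; exact dist_triangle_right _ _ _
      _ < ε / (4 * (C + 1)) + ε / (4 * (C + 1)) := add_lt_add (hF x) (hF y)
      _ = ε / (2 * (C + 1)) := by field_simp; ring
  have hCε : C * (ε / (2 * (C + 1))) < ε / 2 := by
    rw [mul_div_assoc', div_lt_div_iff₀ (by positivity) two_pos]
    nlinarith
  calc dist (x : X) y ≤ ε / 2 + C * dist (f x) (f y) := hCA x x.2 y y.2
    _ ≤ ε / 2 + C * (ε / (2 * (C + 1))) := by gcongr
    _ < ε := by linarith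

section CompactnessEstimate

variable {𝕜 V E F W : Type*} [RCLike 𝕜] [AddCommGroup V] [Module 𝕜 V]
  [NormedAddCommGroup E] [NormedSpace 𝕜 E] [SeminormedAddCommGroup F] [NormedSpace 𝕜 F]
  [NormedAddCommGroup W] [NormedSpace 𝕜 W] {j : V →ₗ[𝕜] E} {L : V →ₗ[𝕜] F} {ι : E →L[𝕜] W}

theorem exists_norm_le_of_isCompact_closure_image (hι : Function.Injective ι)
    (hcpt : IsCompact (closure (j '' {v | ‖L v‖ ≤ 1}))) :
    ∀ ε > (0 : ℝ), ∃ C ≥ (0 : ℝ), ∀ v, ‖j v‖ ≤ ε * ‖L v‖ + C * ‖ι (j v)‖ := by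
  intro ε hε
  set Q := closure (j '' {v | ‖L v‖ ≤ 1}) ∩ sphere 0 ε
  have hιQ : ∀ x ∈ Q, 0 < ‖ι x‖ := fun x hx ↦ by
    have hx0 : x ≠ 0 := ne_zero_of_mem_sphere hε.ne' ⟨x, hx.2⟩
    exact norm_pos_iff.mpr ((map_ne_zero_iff ι hι).mpr hx0)
  obtain ⟨m, hm, hmQ⟩ := (hcpt.inter_right isClosed_sphere).exists_forall_le'
    (continuous_norm.comp ι.continuous).continuousOn hιQ
  refine ⟨ε / m, by positivity, fun v ↦ ?_⟩
  rcases le_or_gt ‖j v‖ (ε * ‖L v‖) with hv | hv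
  · have : 0 ≤ ε / m * ‖ι (j v)‖ := by positivity
    linarith
  -- rescale `v` onto the sphere of radius `ε`, where `‖ι ·‖ ≥ m`
  have hjv : 0 < ‖j v‖ := (mul_nonneg hε.le (norm_nonneg _)).trans_lt hv
  set c : ℝ := ε / ‖j v‖
  have hc : ‖(c : 𝕜)‖ = c := by simp [c, abs_of_pos hε]
  have hmem : j ((c : 𝕜) • v) ∈ Q := by
    refine ⟨subset_closure ⟨(c : 𝕜) • v, ?_, rfl⟩, ?_⟩
    · show ‖L ((c : 𝕜) • v)‖ ≤ 1
      rw [map_smul, norm_smul, hc, div_mul_eq_mul_div, div_le_one hjv]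
      exact hv.le
    · rw [mem_sphere_zero_iff_norm, map_smul, norm_smul, hc, div_mul_cancel₀ _ hjv.ne']
  have : m ≤ ‖ι (j ((c : 𝕜) • v))‖ := hmQ _ hmem
  rw [map_smul, map_smul, norm_smul, hc, div_mul_eq_mul_div, le_div_iff₀ hjv] at this
  have : ‖j v‖ ≤ ε * ‖ι (j v)‖ / m := by rwa [le_div_iff₀ hm, mul_comm]
  rw [div_mul_eq_mul_div]
  nlinarith [mul_nonneg hε.le (norm_nonneg (L v))]

theorem totallyBounded_image_of_forall_norm_le (hι : IsCompactOperator ι)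
    (hbdd : Bornology.IsBounded (j '' {v | ‖L v‖ ≤ 1}))
    (hest : ∀ ε > (0 : ℝ), ∃ C ≥ (0 : ℝ), ∀ v, ‖j v‖ ≤ ε * ‖L v‖ + C * ‖ι (j v)‖) :
    TotallyBounded (j '' {v | ‖L v‖ ≤ 1}) := by
  refine totallyBounded_of_dist_le_add_mul_dist (f := ι)
    ((hι.isCompact_closure_image_of_bounded (f := (ι : E →ₗ[𝕜] W)) hbdd).totallyBounded.subset
      subset_closure) fun δ hδ ↦ ?_
  obtain ⟨C, hC, hCv⟩ := hest (δ / 2) (half_pos hδ)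
  refine ⟨C, hC, ?_⟩
  rintro _ ⟨v, hv, rfl⟩ _ ⟨w, hw, rfl⟩
  have hL : ‖L (v - w)‖ ≤ 2 := by
    rw [map_sub]
    exact (norm_sub_le _ _).trans (by linarith [hv.out, hw.out])
  calc dist (j v) (j w) = ‖j (v - w)‖ := by rw [dist_eq_norm, map_sub]
    _ ≤ δ / 2 * ‖L (v - w)‖ + C * ‖ι (j (v - w))‖ := hCv _
    _ ≤ δ / 2 * 2 + C * dist (ι (j v)) (ι (j w)) := by
        rw [dist_eq_norm, ← map_sub, ← map_sub]; gcongr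
    _ = δ + C * dist (ι (j v)) (ι (j w)) := by ring

theorem isCompact_closure_image_iff_forall_norm_le [CompleteSpace E] (hι : IsCompactOperator ι)
    (hι_inj : Function.Injective ι) (hbdd : Bornology.IsBounded (j '' {v | ‖L v‖ ≤ 1})) :
    IsCompact (closure (j '' {v | ‖L v‖ ≤ 1})) ↔
      ∀ ε > (0 : ℝ), ∃ C ≥ (0 : ℝ), ∀ v, ‖j v‖ ≤ ε * ‖L v‖ + C * ‖ι (j v)‖ :=
  ⟨exists_norm_le_of_isCompact_closure_image hι_inj, fun hest ↦
    (totallyBounded_image_of_forall_norm_le hι hbdd hest).closure.isCompact_of_isClosed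
      isClosed_closure⟩

end CompactnessEstimate

namespace LinearPMap

variable {𝕜 E F : Type*} [RCLike 𝕜] [NormedAddCommGroup E] [InnerProductSpace 𝕜 E]
  [NormedAddCommGroup F] [InnerProductSpace 𝕜 F] {T : E →ₗ.[𝕜] F} {S : F →L[𝕜] E}

theorem canonicalSolution_apply_self
    (hS_sol : ∀ y ∈ LinearMap.range T.toFun, ∃ hy : S y ∈ T.domain,
      S y ∈ ((LinearMap.ker T.toFun).map T.domain.subtype)ᗮ ∧ T ⟨S y, hy⟩ = y)
    {u : T.domain} (hu : (u : E) ∈ ((LinearMap.ker T.toFun).map T.domain.subtype)ᗮ) :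
    S (T u) = u := by
  obtain ⟨hy, horth, hTS⟩ := hS_sol (T u) ⟨u, rfl⟩
  have hker : (u : E) - S (T u) ∈ (LinearMap.ker T.toFun).map T.domain.subtype :=
    ⟨u - ⟨S (T u), hy⟩, show T (u - ⟨S (T u), hy⟩) = 0 by rw [T.map_sub, hTS, sub_self], rfl⟩
  have : (u : E) - S (T u) = 0 :=
    (Submodule.inf_orthogonal_eq_bot _).le ⟨hker, Submodule.sub_mem _ hu horth⟩
  exact (sub_eq_zero.mp this).symm

theorem image_closedBall_canonicalSolution [(LinearMap.range T.toFun).HasOrthogonalProjection]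
    (hS_zero : ∀ y ∈ (LinearMap.range T.toFun)ᗮ, S y = 0)
    (hS_sol : ∀ y ∈ LinearMap.range T.toFun, ∃ hy : S y ∈ T.domain,
      S y ∈ ((LinearMap.ker T.toFun).map T.domain.subtype)ᗮ ∧ T ⟨S y, hy⟩ = y) :
    S '' closedBall 0 1 =
      (fun v : (((LinearMap.ker T.toFun).map T.domain.subtype)ᗮ).comap T.domain.subtype ↦
        ((v : T.domain) : E)) '' {v | ‖T v‖ ≤ 1} := by
  ext x
  constructor
  · rintro ⟨y, hy, rfl⟩
    set p := (LinearMap.range T.toFun).starProjection y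
    obtain ⟨hp, horth, hTS⟩ := hS_sol p (Submodule.starProjection_apply_mem _ y)
    have hSy : S y = S p := by
      rw [← sub_eq_zero, ← ContinuousLinearMap.map_sub]
      exact hS_zero _ (Submodule.sub_starProjection_mem_orthogonal y)
    refine ⟨⟨⟨S p, hp⟩, horth⟩, ?_, hSy.symm⟩
    show ‖T ⟨S p, hp⟩‖ ≤ 1
    rw [hTS]
    exact (Submodule.norm_starProjection_apply_le _ y).trans (mem_closedBall_zero_iff.mp hy)
  · rintro ⟨v, hv, rfl⟩
    exact ⟨T v, mem_closedBall_zero_iff.mpr hv, canonicalSolution_apply_self hS_sol v.2⟩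

end LinearPMap

theorem canonical_solution_compact_iff_compactness_estimates_general
    {H₀ H₁ W : Type*}
    [NormedAddCommGroup H₀] [InnerProductSpace ℂ H₀] [CompleteSpace H₀]
    [NormedAddCommGroup H₁] [InnerProductSpace ℂ H₁] [CompleteSpace H₁]
    [NormedAddCommGroup W] [InnerProductSpace ℂ W]
    (T : H₀ →ₗ.[ℂ] H₁)
    (hrange : IsClosed ((LinearMap.range T.toFun : Submodule ℂ H₁) : Set H₁))
    (S : H₁ →L[ℂ] H₀)
    (hS_zero : ∀ y ∈ (LinearMap.range T.toFun)ᗮ, S y = 0)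
    (hS_sol : ∀ y ∈ LinearMap.range T.toFun,
      ∃ hy : S y ∈ T.domain,
        S y ∈ ((LinearMap.ker T.toFun).map T.domain.subtype)ᗮ ∧
        T ⟨S y, hy⟩ = y)
    (ι : H₀ →L[ℂ] W)
    (hι_compact : IsCompactOperator (⇑ι))
    (hι_inj : Function.Injective (⇑ι)) :
    IsCompactOperator (⇑S) ↔
      ∀ ε > (0 : ℝ), ∃ C ≥ (0 : ℝ), ∀ u : T.domain,
        (u : H₀) ∈ ((LinearMap.ker T.toFun).map T.domain.subtype)ᗮ →
        ‖(u : H₀)‖ ≤ ε * ‖T u‖ + C * ‖ι (u : H₀)‖ := by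
  have := hrange.completeSpace_coe
  set P := (((LinearMap.ker T.toFun).map T.domain.subtype)ᗮ).comap T.domain.subtype
  have hS_image := LinearPMap.image_closedBall_canonicalSolution hS_zero hS_sol
  have hbdd : Bornology.IsBounded (S '' closedBall 0 1) :=
    S.lipschitz.isBounded_image isBounded_closedBall
  rw [hS_image] at hbdd
  calc IsCompactOperator S ↔ IsCompact (closure (S '' closedBall 0 1)) :=
        isCompactOperator_iff_isCompact_closure_image_closedBall (S : H₁ →ₗ[ℂ] H₀) one_pos
    _ ↔ ∀ ε > (0 : ℝ), ∃ C ≥ (0 : ℝ), ∀ v : P, ‖((v : T.domain) : H₀)‖ ≤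
          ε * ‖T v‖ + C * ‖ι ((v : T.domain) : H₀)‖ := by
        rw [hS_image]
        exact isCompact_closure_image_iff_forall_norm_le (j := T.domain.subtype ∘ₗ P.subtype)
          (L := T.toFun ∘ₗ P.subtype) hι_compact hι_inj hbdd
    _ ↔ _ := forall₂_congr fun ε _ ↦ exists_congr fun C ↦ and_congr_right fun _ ↦
        ⟨fun h u hu ↦ h ⟨u, hu⟩, fun h v ↦ h v v.2⟩

/-- The canonical solution operator `S` of a closed, densely defined operator `T` with
closed range is compact if and only if the family of compactness estimates
`‖u‖ ≤ ε ‖T u‖ + C_ε ‖ι u‖` holds for all `u ∈ dom T` with `u ⊥ ker T`, where `ι` is a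
compact injective bounded operator. -/
theorem canonical_solution_compact_iff_compactness_estimates
    {H₀ H₁ W : Type*}
    [NormedAddCommGroup H₀] [InnerProductSpace ℂ H₀] [CompleteSpace H₀]
    [NormedAddCommGroup H₁] [InnerProductSpace ℂ H₁] [CompleteSpace H₁]
    [NormedAddCommGroup W] [InnerProductSpace ℂ W] [CompleteSpace W]
    (T : H₀ →ₗ.[ℂ] H₁)
    (hdense : Dense (T.domain : Set H₀))
    (hclosed : T.IsClosed)
    (hrange : IsClosed ((LinearMap.range T.toFun : Submodule ℂ H₁) : Set H₁))
    (S : H₁ →L[ℂ] H₀)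
    (hS_zero : ∀ y ∈ (LinearMap.range T.toFun)ᗮ, S y = 0)
    (hS_sol : ∀ y ∈ LinearMap.range T.toFun,
      ∃ hy : S y ∈ T.domain,
        S y ∈ ((LinearMap.ker T.toFun).map T.domain.subtype)ᗮ ∧
        T ⟨S y, hy⟩ = y)
    (ι : H₀ →L[ℂ] W)
    (hι_compact : IsCompactOperator (⇑ι))
    (hι_inj : Function.Injective (⇑ι)) :
    IsCompactOperator (⇑S) ↔
      ∀ ε > (0 : ℝ), ∃ C ≥ (0 : ℝ), ∀ u : T.domain,
        (u : H₀) ∈ ((LinearMap.ker T.toFun).map T.domain.subtype)ᗮ →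
        ‖(u : H₀)‖ ≤ ε * ‖T u‖ + C * ‖ι (u : H₀)‖ :=
  canonical_solution_compact_iff_compactness_estimates_general T hrange S hS_zero hS_sol ι
    hι_compact hι_inj
end
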